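/- arXiv:1811.07673 — 4 statements merged into one kernel-verified Lean document; each statement's English description precedes it below -/
import Mathlib

section
/- Let h: 2^N → ℝ≥0 be a submodular function and let S be a random subset of N such that each element of N appears in S with probability at most p (not necessarily independently). Then E[h(S)] ≥ (1−p)·h(∅). -/
open MeasureTheory ProbabilityTheory

/-- Greedy construction: for a nonincreasing submodular function `g` on subsets of `E`,
there is a nonpositive vector `y` with `g ∅ + ∑_{T} y ≤ g T` for all `T ⊆ E` and
equality at `E`. -/
lemma greedy_exists_aux {α : Type*} [DecidableEq α] (g : Finset α → ℝ) :
    ∀ E : Finset α,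
    (∀ X Y : Finset α, X ⊆ Y → Y ⊆ E → g Y ≤ g X) →
    (∀ X ⊆ E, ∀ Y ⊆ E, g (X ∩ Y) + g (X ∪ Y) ≤ g X + g Y) →
    ∃ y : α → ℝ, (∀ u, y u ≤ 0) ∧ (∀ T ⊆ E, g ∅ + ∑ u ∈ T, y u ≤ g T) ∧
      g ∅ + ∑ u ∈ E, y u = g E := by
  classical
  intro E
  induction E using Finset.induction_on with
  | empty =>
    intro _ _
    exact ⟨fun _ => 0, fun _ => le_rfl, by simp, by simp⟩
  | @insert u E' hu ih =>
    intro mono sub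
    obtain ⟨y', hy'neg, hy'feas, hy'tot⟩ := ih
      (fun X Y hXY hYE => mono X Y hXY (hYE.trans (Finset.subset_insert u E')))
      (fun X hX Y hY => sub X (hX.trans (Finset.subset_insert u E')) Y
        (hY.trans (Finset.subset_insert u E')))
    refine ⟨fun v => if v = u then g (insert u E') - g E' else y' v, ?_, ?_, ?_⟩
    · intro v
      show (if v = u then g (insert u E') - g E' else y' v) ≤ 0
      by_cases hv : v = u
      · have hmono := mono E' (insert u E') (Finset.subset_insert u E') (le_refl _)
        rw [if_pos hv]
        linarith
      · rw [if_neg hv]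
        exact hy'neg v
    · intro T hT
      by_cases huT : u ∈ T
      · have hTe : T.erase u ⊆ E' := by
          intro v hv
          have hvT := hT (Finset.mem_of_mem_erase hv)
          rcases Finset.mem_insert.mp hvT with hh | hh
          · exact absurd hh (Finset.ne_of_mem_erase hv)
          · exact hh
        have hsum : ∑ v ∈ T, (if v = u then g (insert u E') - g E' else y' v)
            = (g (insert u E') - g E') + ∑ v ∈ T.erase u, y' v := by
          rw [← Finset.add_sum_erase T _ huT, if_pos rfl]
          congr 1
          exact Finset.sum_congr rfl (fun v hv => if_neg (Finset.ne_of_mem_erase hv))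
        rw [hsum]
        have h1 : g ∅ + ∑ v ∈ T.erase u, y' v ≤ g (T.erase u) := hy'feas _ hTe
        have e1 : E' ∩ insert u (T.erase u) = T.erase u := by
          ext a
          simp only [Finset.mem_inter, Finset.mem_insert]
          constructor
          · rintro ⟨haE, ha | ha⟩
            · exact absurd (ha ▸ haE) hu
            · exact ha
          · intro ha
            exact ⟨hTe ha, Or.inr ha⟩
        have e2 : E' ∪ insert u (T.erase u) = insert u E' := by
          ext a
          simp only [Finset.mem_union, Finset.mem_insert]
          constructor
          · rintro (ha | ha | ha)
            · exact Or.inr ha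
            · exact Or.inl ha
            · exact Or.inr (hTe ha)
          · rintro (ha | ha)
            · exact Or.inr (Or.inl ha)
            · exact Or.inl ha
        have h2 := sub E' (Finset.subset_insert u E') (insert u (T.erase u))
          (by
            intro a ha
            rcases Finset.mem_insert.mp ha with hh | hh
            · exact hh ▸ Finset.mem_insert_self u E'
            · exact Finset.mem_insert_of_mem (hTe hh))
        rw [e1, e2, Finset.insert_erase huT] at h2
        linarith
      · have hTe : T ⊆ E' := by
          intro v hv
          rcases Finset.mem_insert.mp (hT hv) with hh | hh
          · exact absurd (hh ▸ hv) huT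
          · exact hh
        have : ∑ v ∈ T, (if v = u then g (insert u E') - g E' else y' v)
            = ∑ v ∈ T, y' v := by
          refine Finset.sum_congr rfl ?_
          intro v hv
          rw [if_neg (by rintro rfl; exact huT hv)]
        rw [this]
        exact hy'feas T hTe
    · rw [Finset.sum_insert hu]
      have hif : (if u = u then g (insert u E') - g E' else y' u)
          = g (insert u E') - g E' := if_pos rfl
      rw [hif]
      have : ∑ v ∈ E', (if v = u then g (insert u E') - g E' else y' v)
          = ∑ v ∈ E', y' v := by
        refine Finset.sum_congr rfl ?_
        intro v hv
        rw [if_neg (by rintro rfl; exact hu hv)]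
      rw [this]
      linarith

/-- sampling lemma for nonnegative submodular functions. -/
theorem expected_value_of_random_subset
    {α : Type*} [DecidableEq α] (N : Finset α) (h : Finset α → ℝ)
    (hnn : ∀ X, X ⊆ N → 0 ≤ h X)
    (hsub : ∀ X ⊆ N, ∀ Y ⊆ N, h (X ∩ Y) + h (X ∪ Y) ≤ h X + h Y)
    {Ω : Type*} [MeasureSpace Ω] [IsProbabilityMeasure (ℙ : Measure Ω)]
    (S : Ω → Finset α) (hSN : ∀ ω, S ω ⊆ N)
    (p : ℝ) (hp0 : 0 ≤ p) (hp1 : p ≤ 1)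
    (hprob : ∀ u ∈ N, ((ℙ : Measure Ω) {ω | u ∈ S ω}).toReal ≤ p)
    (hint : Integrable (fun ω => h (S ω)) (ℙ : Measure Ω)) :
    (1 - p) * h ∅ ≤ ∫ ω, h (S ω) := by
  classical
  -- the lower truncation of h
  set g : Finset α → ℝ := fun X => X.powerset.inf' (Finset.powerset_nonempty X) h with hg
  have hgle : ∀ X : Finset α, g X ≤ h X := fun X =>
    Finset.inf'_le _ (Finset.mem_powerset_self X)
  have hgmono : ∀ X Y : Finset α, X ⊆ Y → g Y ≤ g X := by
    intro X Y hXY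
    refine Finset.le_inf' _ _ ?_
    intro Z hZ
    exact Finset.inf'_le _ (Finset.mem_powerset.mpr
      ((Finset.mem_powerset.mp hZ).trans hXY))
  have hgempty : g ∅ = h ∅ := by
    simp [hg]
  have hgex : ∀ X : Finset α, ∃ Z, Z ⊆ X ∧ g X = h Z := by
    intro X
    obtain ⟨Z, hZ, hZe⟩ := Finset.exists_mem_eq_inf' (Finset.powerset_nonempty X) h
    exact ⟨Z, Finset.mem_powerset.mp hZ, hZe⟩
  have hgsub : ∀ X ⊆ N, ∀ Y ⊆ N, g (X ∩ Y) + g (X ∪ Y) ≤ g X + g Y := by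
    intro X hX Y hY
    obtain ⟨ZX, hZX, heX⟩ := hgex X
    obtain ⟨ZY, hZY, heY⟩ := hgex Y
    have h1 : g (X ∩ Y) ≤ h (ZX ∩ ZY) :=
      Finset.inf'_le _ (Finset.mem_powerset.mpr
        (Finset.inter_subset_inter hZX hZY))
    have h2 : g (X ∪ Y) ≤ h (ZX ∪ ZY) :=
      Finset.inf'_le _ (Finset.mem_powerset.mpr
        (Finset.union_subset_union hZX hZY))
    have h3 := hsub ZX (hZX.trans hX) ZY (hZY.trans hY)
    rw [heX, heY]
    linarith
  obtain ⟨y, hyneg, hyfeas, hytot⟩ := greedy_exists_aux g N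
    (fun X Y hXY _ => hgmono X Y hXY) hgsub
  have hgNnn : 0 ≤ g N := by
    obtain ⟨Z, hZ, hZe⟩ := hgex N
    rw [hZe]; exact hnn Z hZ
  have hytotnn : -(h ∅) ≤ ∑ u ∈ N, y u := by
    rw [hgempty] at hytot
    linarith
  -- measurable hulls of the events {u ∈ S ω}
  set F : α → Set Ω := fun u => toMeasurable ℙ {ω | u ∈ S ω} with hF
  have hFmeas : ∀ u, MeasurableSet (F u) := fun u => measurableSet_toMeasurable _ _
  have hFprob : ∀ u ∈ N, ((ℙ : Measure Ω) (F u)).toReal ≤ p := by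
    intro u hu
    rw [hF]
    rw [measure_toMeasurable]
    exact hprob u hu
  -- the comparison function
  set φ : Ω → ℝ := fun ω =>
    h ∅ + ∑ u ∈ N, y u * Set.indicator (F u) (fun _ => (1 : ℝ)) ω with hφ
  have hφint : Integrable φ ℙ := by
    refine (integrable_const (h ∅)).add ?_
    refine integrable_finset_sum _ ?_
    intro u _
    exact ((integrable_const (1 : ℝ)).indicator (hFmeas u)).const_mul (y u)
  have hle : ∀ ω, φ ω ≤ h (S ω) := by
    intro ω
    have step1 : ∀ u ∈ N, y u * Set.indicator (F u) (fun _ => (1 : ℝ)) ω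
        ≤ (if u ∈ S ω then y u else 0) := by
      intro u _
      by_cases hus : u ∈ S ω
      · have hωF : ω ∈ F u := subset_toMeasurable _ _ hus
        simp [Set.indicator_apply, hωF, hus]
      · simp only [if_neg hus]
        by_cases hωF : ω ∈ F u
        · simp only [Set.indicator_apply, if_pos hωF, mul_one]
          exact hyneg u
        · simp [Set.indicator_apply, hωF]
    have step2 : ∑ u ∈ N, (if u ∈ S ω then y u else 0) = ∑ u ∈ S ω, y u := by
      rw [Finset.sum_ite_mem]
      rw [Finset.inter_eq_right.mpr (hSN ω)]
    have step3 : h ∅ + ∑ u ∈ S ω, y u ≤ h (S ω) := by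
      have := hyfeas (S ω) (hSN ω)
      rw [hgempty] at this
      exact this.trans (hgle (S ω))
    calc φ ω = h ∅ + ∑ u ∈ N, y u * Set.indicator (F u) (fun _ => (1 : ℝ)) ω := rfl
      _ ≤ h ∅ + ∑ u ∈ N, (if u ∈ S ω then y u else 0) := by
          gcongr with u hu
          exact step1 u hu
      _ = h ∅ + ∑ u ∈ S ω, y u := by rw [step2]
      _ ≤ h (S ω) := step3
  have hintle : ∫ ω, φ ω ∂ℙ ≤ ∫ ω, h (S ω) ∂ℙ :=
    integral_mono hφint hint hle
  have hφval : ∫ ω, φ ω ∂ℙ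
      = h ∅ + ∑ u ∈ N, y u * ((ℙ : Measure Ω) (F u)).toReal := by
    rw [hφ]
    rw [integral_add (integrable_const _) (integrable_finset_sum _
      (fun u _ => ((integrable_const (1 : ℝ)).indicator (hFmeas u)).const_mul (y u)))]
    rw [integral_const]
    simp only [measure_univ, probReal_univ, ENNReal.toReal_one, smul_eq_mul, one_mul]
    congr 1
    rw [integral_finset_sum _
      (fun u _ => ((integrable_const (1 : ℝ)).indicator (hFmeas u)).const_mul (y u))]
    refine Finset.sum_congr rfl ?_
    intro u _
    rw [integral_const_mul]
    congr 1
    rw [integral_indicator (hFmeas u)]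
    simp [Measure.real]
  have hbound : h ∅ + p * ∑ u ∈ N, y u
      ≤ h ∅ + ∑ u ∈ N, y u * ((ℙ : Measure Ω) (F u)).toReal := by
    have : ∀ u ∈ N, y u * p ≤ y u * ((ℙ : Measure Ω) (F u)).toReal := by
      intro u hu
      exact mul_le_mul_of_nonpos_left (hFprob u hu) (hyneg u)
    have hsum : ∑ u ∈ N, y u * p ≤ ∑ u ∈ N, y u * ((ℙ : Measure Ω) (F u)).toReal :=
      Finset.sum_le_sum this
    have : p * ∑ u ∈ N, y u = ∑ u ∈ N, y u * p := by
      rw [Finset.mul_sum]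
      exact Finset.sum_congr rfl (fun u _ => mul_comm _ _)
    linarith
  have hfinal : (1 - p) * h ∅ ≤ h ∅ + p * ∑ u ∈ N, y u := by
    have : p * (-(h ∅)) ≤ p * ∑ u ∈ N, y u :=
      mul_le_mul_of_nonneg_left hytotnn hp0
    nlinarith
  linarith
end

section
/- Let f be submodular on N, let S ⊆ N, and let A_1, …, A_m be pairwise disjoint subsets of N\S, with T := S ∪ A_1 ∪ ⋯ ∪ A_m and sets S_1, …, S_m satisfying S_i ⊆ T \ (A_i ∪ ⋯ ∪ A_m). Then f(T) − f(T \ (A_1 ∪ ⋯ ∪ A_m)) ≤ Σ_{i=1}^m Σ_{q ∈ A_i} [f(S_i ∪ {q}) − f(S_i)]. -/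
/-!
Starting from `T \ ⋃ A`, add back `A 1, …, A m` in turn. When `A i` is added, the current set
contains `Si i` and is disjoint from `A i`; since submodularity makes marginal gains shrink as the
base set grows, adding the elements of `A i` one at a time raises `f` by at most
`∑ q ∈ A i, Δf(q | Si i)`. The increments telescope to `f T - f (T \ ⋃ A)`.
-/

open Finset

section

variable {α β : Type*} [DecidableEq α] [AddCommGroup β] [PartialOrder β] [IsOrderedAddMonoid β]

theorem Finset.sdiff_biUnion_filter_le_subset {ι : Type*} [LinearOrder ι] (T : Finset α)
    (s : Finset ι) (A : ι → Finset α) (i : ι) :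
    T \ (s.filter (i ≤ ·)).biUnion A ⊆ T \ s.biUnion A ∪ (s.filter (· < i)).biUnion A := by
  intro x hx
  rw [mem_sdiff] at hx
  by_cases h : x ∈ s.biUnion A
  · obtain ⟨j, hj, hxj⟩ := mem_biUnion.mp h
    have hji : j < i := lt_of_not_ge fun hij =>
      hx.2 (mem_biUnion.mpr ⟨j, mem_filter.mpr ⟨hj, hij⟩, hxj⟩)
    exact mem_union_right _ (mem_biUnion.mpr ⟨j, mem_filter.mpr ⟨hj, hji⟩, hxj⟩)
  · exact mem_union_left _ (mem_sdiff.mpr ⟨hx.1, h⟩)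

def SubmodularOn (N : Finset α) (f : Finset α → β) : Prop :=
  ∀ X ⊆ N, ∀ Y ⊆ N, f (X ∩ Y) + f (X ∪ Y) ≤ f X + f Y

namespace SubmodularOn

variable {N : Finset α} {f : Finset α → β}

theorem marginal_antitone (hf : SubmodularOn N f) {S X : Finset α} (hSX : S ⊆ X) (hXN : X ⊆ N)
    {q : α} (hqN : q ∈ N) (hqX : q ∉ X) :
    f (insert q X) - f X ≤ f (insert q S) - f S := by
  have h := hf X hXN (insert q S) (insert_subset hqN (hSX.trans hXN))
  have hinter : X ∩ insert q S = S := by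
    rw [inter_insert_of_notMem hqX, inter_eq_right.mpr hSX]
  rw [hinter, union_insert, union_eq_left.mpr hSX] at h
  rw [sub_le_sub_iff, add_comm (f (insert q S))]
  rwa [add_comm (f (insert q X))]

theorem sub_le_sum_marginal (hf : SubmodularOn N f) {S V B : Finset α} (hSV : S ⊆ V)
    (hVN : V ⊆ N) (hBN : B ⊆ N) (hBV : Disjoint B V) :
    f (V ∪ B) - f V ≤ ∑ q ∈ B, (f (insert q S) - f S) := by
  induction B using Finset.induction_on with
  | empty => simp
  | @insert p B hpB ih =>
    rw [insert_subset_iff] at hBN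
    rw [disjoint_insert_left] at hBV
    have hstep : f (insert p (V ∪ B)) - f (V ∪ B) ≤ f (insert p S) - f S :=
      hf.marginal_antitone (hSV.trans subset_union_left) (union_subset hVN hBN.2) hBN.1
        (by simp [hBV.1, hpB])
    calc f (V ∪ insert p B) - f V
        = (f (insert p (V ∪ B)) - f (V ∪ B)) + (f (V ∪ B) - f V) := by
          rw [union_insert]; abel
      _ ≤ (f (insert p S) - f S) + ∑ q ∈ B, (f (insert q S) - f S) :=
          add_le_add hstep (ih hBN.2 hBV.2)
      _ = ∑ q ∈ insert p B, (f (insert q S) - f S) := by rw [sum_insert hpB]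

theorem sub_le_sum_marginal_biUnion {ι : Type*} [LinearOrder ι] (hf : SubmodularOn N f)
    {V : Finset α} (hVN : V ⊆ N) (A : ι → Finset α) (s : Finset ι)
    (hAN : ∀ i ∈ s, A i ⊆ N) (hAV : ∀ i ∈ s, Disjoint (A i) V)
    (hA : (s : Set ι).PairwiseDisjoint A) (S : ι → Finset α)
    (hS : ∀ i ∈ s, S i ⊆ V ∪ (s.filter (· < i)).biUnion A) :
    f (V ∪ s.biUnion A) - f V ≤ ∑ i ∈ s, ∑ q ∈ A i, (f (insert q (S i)) - f (S i)) := by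
  induction s using Finset.induction_on_max with
  | empty => simp
  | insert a s hlt ih =>
    have has : a ∉ s := fun h => lt_irrefl a (hlt a h)
    have hfilter_a : (insert a s).filter (· < a) = s := by
      rw [filter_insert, if_neg (lt_irrefl a), filter_true_of_mem hlt]
    have hfilter : ∀ i ∈ s, (insert a s).filter (· < i) = s.filter (· < i) := fun i hi => by
      rw [filter_insert, if_neg (hlt i hi).not_gt]
    have hVs : V ∪ s.biUnion A ⊆ N :=
      union_subset hVN (biUnion_subset.mpr fun i hi => hAN i (mem_insert_of_mem hi))
    have hAa : Disjoint (A a) (V ∪ s.biUnion A) := by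
      refine disjoint_union_right.mpr ⟨hAV a (mem_insert_self a s), ?_⟩
      exact (disjoint_biUnion_right _ _ _).mpr fun i hi =>
        hA (mem_insert_self a s) (mem_insert_of_mem hi) (ne_of_gt (hlt i hi))
    have hSa : S a ⊆ V ∪ s.biUnion A := hfilter_a ▸ hS a (mem_insert_self a s)
    have hstep := hf.sub_le_sum_marginal hSa hVs (hAN a (mem_insert_self a s)) hAa
    have hrest := ih (fun i hi => hAN i (mem_insert_of_mem hi))
      (fun i hi => hAV i (mem_insert_of_mem hi)) (hA.subset (by simp))
      (fun i hi => hfilter i hi ▸ hS i (mem_insert_of_mem hi))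
    calc f (V ∪ (insert a s).biUnion A) - f V
        = (f ((V ∪ s.biUnion A) ∪ A a) - f (V ∪ s.biUnion A)) + (f (V ∪ s.biUnion A) - f V) := by
          rw [biUnion_insert, union_comm (A a), union_assoc]; abel
      _ ≤ _ := add_le_add hstep hrest
      _ = _ := by rw [sum_insert has]

end SubmodularOn

end

/-- bounding the loss of removing the disjoint sets `A i`
from `T` by sums of marginal gains at the smaller sets `Si i`. -/
theorem removal_loss_bound
    {α : Type*} [DecidableEq α] (N : Finset α) (f : Finset α → ℝ)
    (hsub : ∀ X ⊆ N, ∀ Y ⊆ N, f (X ∩ Y) + f (X ∪ Y) ≤ f X + f Y)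
    (S : Finset α) (hSN : S ⊆ N)
    (m : ℕ) (A : Fin m → Finset α)
    (hAsub : ∀ i, A i ⊆ N \ S)
    (hdisj : ∀ i j, i ≠ j → Disjoint (A i) (A j))
    (T : Finset α) (hT : T = S ∪ Finset.univ.biUnion A)
    (Si : Fin m → Finset α)
    (hSi : ∀ i, Si i ⊆ T \ (Finset.univ.filter (fun j => i ≤ j)).biUnion A) :
    f T - f (T \ Finset.univ.biUnion A) ≤
      ∑ i, ∑ q ∈ A i, (f (insert q (Si i)) - f (Si i)) := by
  have hAN : ∀ i, A i ⊆ N := fun i => (hAsub i).trans sdiff_subset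
  have hAT : univ.biUnion A ⊆ T := hT ▸ subset_union_right
  have hTN : T ⊆ N := hT ▸ union_subset hSN (biUnion_subset.mpr fun i _ => hAN i)
  have h := SubmodularOn.sub_le_sum_marginal_biUnion hsub (sdiff_subset.trans hTN) A univ
    (fun i _ => hAN i)
    (fun i _ => disjoint_sdiff.mono_left (subset_biUnion_of_mem A (mem_univ i)))
    (fun i _ j _ hij => hdisj i j hij) Si
    (fun i _ => (hSi i).trans (sdiff_biUnion_filter_le_subset T univ A i))
  rwa [sdiff_union_of_subset hAT] at h
end

section
/- Suppose E[f(S)] = p·T for some T ≥ 0, E[f(S∪OPT)] and E[f(Q)] satisfy f(S) > f(Q)/(1+ε) pointwise, and E[f(Q)] ≥ E[f(S∪OPT)] − (Pr_max/((1−ε)·p))·E[f(S)] where Pr_max = max(pk, 1−p) with 0 < ε < 1, 0 < p < 1, k ≥ 1. Then E[f(S)] > [(1−ε)p / ((1−ε²)p + Pr_max)] · E[f(S∪OPT)]. -/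
/-!
Integrating the pointwise bound gives `E[f(Q)] < (1 + ε) E[f(S)]`, strictly because the
measure is nonzero. Substituting this into the assumed lower bound on `E[f(Q)]` gives
`E[f(S ∪ OPT)] < ((1 + ε) + Pr_max / ((1 - ε) p)) E[f(S)]`, and clearing the denominator
`(1 - ε) p` turns the bracket into `((1 - ε²) p + Pr_max) / ((1 - ε) p)`.
-/

open MeasureTheory ProbabilityTheory

theorem MeasureTheory.integral_lt_integral_of_forall_lt {α : Type*} [MeasurableSpace α]
    {μ : Measure α} [NeZero μ] {f g : α → ℝ} (hf : Integrable f μ) (hg : Integrable g μ)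
    (hfg : ∀ x, f x < g x) : ∫ x, f x ∂μ < ∫ x, g x ∂μ := by
  have hpos : ∀ x, 0 < g x - f x := fun x => sub_pos.mpr (hfg x)
  have hsupp : Function.support (fun x => g x - f x) = Set.univ :=
    Set.eq_univ_of_forall fun x => (hpos x).ne'
  rw [← sub_pos, ← integral_sub hg hf,
    integral_pos_iff_support_of_nonneg (fun x => (hpos x).le) (hg.sub hf), hsupp]
  exact Measure.measure_univ_pos.mpr (NeZero.ne μ)

theorem div_mul_lt_of_lt_mul_of_sub_div_mul_le {S Q O a c M : ℝ} (ha : 0 < a) (hc : 0 < c)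
    (hM : 0 ≤ M) (hQ : Q < a * S) (hO : O - M / c * S ≤ Q) :
    c / (a * c + M) * O < S := by
  have hD : 0 < a * c + M := by positivity
  have hO' : c * O < (a * c + M) * S := by
    calc c * O ≤ c * (Q + M / c * S) := by gcongr; linarith
      _ < c * (a * S + M / c * S) := by gcongr
      _ = (a * c + M) * S := by field_simp
  rw [div_mul_eq_mul_div, div_lt_iff₀ hD]
  linarith

theorem combine_expectation_inequalities_general
    {Ω : Type*} [MeasureSpace Ω] [IsProbabilityMeasure (ℙ : Measure Ω)]
    (fS fQ fSO : Ω → ℝ)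
    (hintS : Integrable fS ℙ) (hintQ : Integrable fQ ℙ)
    (ε p : ℝ) (hε0 : 0 < ε) (hε1 : ε < 1) (hp0 : 0 < p)
    (k : ℕ)
    (hpoint : ∀ ω, fQ ω / (1 + ε) < fS ω)
    (hEQ : (∫ ω, fSO ω) - (max (p * k) (1 - p) / ((1 - ε) * p)) * ∫ ω, fS ω
            ≤ ∫ ω, fQ ω) :
    ((1 - ε) * p / ((1 - ε ^ 2) * p + max (p * k) (1 - p))) * ∫ ω, fSO ω
      < ∫ ω, fS ω := by
  have hε : 0 < 1 + ε := by linarith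
  have hQS : ∫ ω, fQ ω < (1 + ε) * ∫ ω, fS ω := by
    have := integral_lt_integral_of_forall_lt (hintQ.div_const (1 + ε)) hintS hpoint
    rwa [integral_div, div_lt_iff₀ hε, mul_comm] at this
  have hPrmax : 0 ≤ max (p * k) (1 - p) := le_max_of_le_left (by positivity)
  have hden : (1 - ε ^ 2) * p = (1 + ε) * ((1 - ε) * p) := by ring
  rw [hden]
  exact div_mul_lt_of_lt_mul_of_sub_div_mul_le hε (mul_pos (by linarith) hp0) hPrmax hQS hEQ

/-- combining the expectation inequalities of Lemmas 1-3. -/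
theorem combine_expectation_inequalities
    {Ω : Type*} [MeasureSpace Ω] [IsProbabilityMeasure (ℙ : Measure Ω)]
    (fS fQ fSO : Ω → ℝ)
    (hfSnn : ∀ ω, 0 ≤ fS ω) (hfQnn : ∀ ω, 0 ≤ fQ ω) (hfSOnn : ∀ ω, 0 ≤ fSO ω)
    (hintS : Integrable fS ℙ) (hintQ : Integrable fQ ℙ) (hintSO : Integrable fSO (ℙ : Measure Ω))
    (ε p : ℝ) (hε0 : 0 < ε) (hε1 : ε < 1) (hp0 : 0 < p) (hp1 : p < 1)
    (k : ℕ) (hk : 1 ≤ k)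
    (T : ℝ) (hT : 0 ≤ T) (hES : (∫ ω, fS ω) = p * T)
    (hpoint : ∀ ω, fQ ω / (1 + ε) < fS ω)
    (hEQ : (∫ ω, fSO ω) - (max (p * k) (1 - p) / ((1 - ε) * p)) * ∫ ω, fS ω
            ≤ ∫ ω, fQ ω) :
    ((1 - ε) * p / ((1 - ε ^ 2) * p + max (p * k) (1 - p))) * ∫ ω, fSO ω
      < ∫ ω, fS ω :=
  combine_expectation_inequalities_general fS fQ fSO hintS hintQ ε p hε0 hε1 hp0 k hpoint hEQ
end

section
/- Let f be a nonnegative submodular function on N, OPT ⊆ N fixed, and S a random subset of N with each element included with probability at most p. If E[f(S)] > α·E[f(S∪OPT)] for some α > 0, then E[f(S)] > α·(1−p)·f(OPT). -/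
open MeasureTheory ProbabilityTheory

/-- A nonnegative submodular function `g` on subsets of `N` with `g ∅ = 0`
admits a nonnegative point of its base polytope. -/
lemma exists_base_nonneg {α : Type*} [DecidableEq α] :
    ∀ (N : Finset α) (g : Finset α → ℝ),
    (∀ C ⊆ N, ∀ D ⊆ N, g (C ∩ D) + g (C ∪ D) ≤ g C + g D) →
    (∀ C ⊆ N, 0 ≤ g C) → g ∅ = 0 →
    ∃ y : α → ℝ, (∀ u, 0 ≤ y u) ∧ (∀ C ⊆ N, ∑ u ∈ C, y u ≤ g C) ∧
      ∑ u ∈ N, y u = g N := by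
  intro N
  induction N using Finset.induction_on with
  | empty =>
    intro g _ _ h0
    refine ⟨fun _ => 0, fun _ => le_refl 0, ?_, by simpa using h0.symm⟩
    intro C hC
    rw [Finset.subset_empty] at hC
    subst hC
    simpa using h0.symm.le
  | @insert u Nn hu ih =>
    intro g hsub hnn h0
    set t : ℝ := max 0 (g (insert u Nn) - g Nn) with ht
    -- t ≤ g C for every C ⊆ insert u Nn containing u
    have ht1 : ∀ C ⊆ insert u Nn, u ∈ C → t ≤ g C := by
      intro C hC huC
      refine max_le (hnn C hC) ?_
      have hCN : C ∩ Nn = C.erase u := by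
        ext x
        simp only [Finset.mem_inter, Finset.mem_erase]
        constructor
        · rintro ⟨hx1, hx2⟩
          exact ⟨fun h => hu (h ▸ hx2), hx1⟩
        · rintro ⟨hx1, hx2⟩
          have := hC hx2
          rw [Finset.mem_insert] at this
          exact ⟨hx2, this.resolve_left hx1⟩
      have hCU : C ∪ Nn = insert u Nn := by
        ext x
        simp only [Finset.mem_union, Finset.mem_insert]
        constructor
        · rintro (hx | hx)
          · have := hC hx
            rw [Finset.mem_insert] at this
            exact this
          · exact Or.inr hx
        · rintro (rfl | hx)
          · exact Or.inl huC
          · exact Or.inr hx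
      have h1 := hsub C hC Nn (Finset.subset_insert u Nn)
      rw [hCN, hCU] at h1
      have h2 : 0 ≤ g (C.erase u) :=
        hnn _ ((Finset.erase_subset _ _).trans hC)
      linarith
    set g' : Finset α → ℝ := fun C => min (g C) (g (insert u C) - t) with hg'
    have hsubset' : ∀ C ⊆ Nn, insert u C ⊆ insert u Nn := by
      intro C hC
      exact Finset.insert_subset_insert u hC
    have hg'0 : g' ∅ = 0 := by
      have h1 : t ≤ g (insert u ∅) := ht1 (insert u ∅) (by simp) (by simp)
      simp only [hg', h0]
      exact min_eq_left (by linarith)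
    have hnn' : ∀ C ⊆ Nn, 0 ≤ g' C := by
      intro C hC
      refine le_min (hnn C (hC.trans (Finset.subset_insert u Nn))) ?_
      have := ht1 (insert u C) (hsubset' C hC) (Finset.mem_insert_self u C)
      linarith
    have hsub' : ∀ C ⊆ Nn, ∀ D ⊆ Nn, g' (C ∩ D) + g' (C ∪ D) ≤ g' C + g' D := by
      intro C hC D hD
      have huC : u ∉ C := fun h => hu (hC h)
      have huD : u ∉ D := fun h => hu (hD h)
      have hC' : C ⊆ insert u Nn := hC.trans (Finset.subset_insert u Nn)
      have hD' : D ⊆ insert u Nn := hD.trans (Finset.subset_insert u Nn)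
      have hiC : insert u C ⊆ insert u Nn := hsubset' C hC
      have hiD : insert u D ⊆ insert u Nn := hsubset' D hD
      have e1 : C ∩ insert u D = C ∩ D := by
        ext x; simp only [Finset.mem_inter, Finset.mem_insert]
        constructor
        · rintro ⟨h1, (rfl | h2)⟩
          · exact absurd h1 huC
          · exact ⟨h1, h2⟩
        · rintro ⟨h1, h2⟩; exact ⟨h1, Or.inr h2⟩
      have e2 : C ∪ insert u D = insert u (C ∪ D) := by
        ext x; simp only [Finset.mem_union, Finset.mem_insert]; tauto
      have e3 : insert u C ∩ D = C ∩ D := by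
        ext x; simp only [Finset.mem_inter, Finset.mem_insert]
        constructor
        · rintro ⟨(rfl | h1), h2⟩
          · exact absurd h2 huD
          · exact ⟨h1, h2⟩
        · rintro ⟨h1, h2⟩; exact ⟨Or.inr h1, h2⟩
      have e4 : insert u C ∪ D = insert u (C ∪ D) := by
        ext x; simp only [Finset.mem_union, Finset.mem_insert]; tauto
      have e5 : insert u C ∩ insert u D = insert u (C ∩ D) := by
        ext x; simp only [Finset.mem_inter, Finset.mem_insert]; tauto
      have e6 : insert u C ∪ insert u D = insert u (C ∪ D) := by
        ext x; simp only [Finset.mem_union, Finset.mem_insert]; tauto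
      have hmin1 : g' (C ∩ D) ≤ g (C ∩ D) := min_le_left _ _
      have hmin2 : g' (C ∩ D) ≤ g (insert u (C ∩ D)) - t := min_le_right _ _
      have hmin3 : g' (C ∪ D) ≤ g (C ∪ D) := min_le_left _ _
      have hmin4 : g' (C ∪ D) ≤ g (insert u (C ∪ D)) - t := min_le_right _ _
      rcases min_cases (g C) (g (insert u C) - t) with ⟨hc, _⟩ | ⟨hc, _⟩ <;>
        rcases min_cases (g D) (g (insert u D) - t) with ⟨hd, _⟩ | ⟨hd, _⟩ <;>
        simp only [hg'] at hc hd ⊢ <;> rw [hc, hd]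
      · have := hsub C hC' D hD'
        have h1 : min (g (C ∩ D)) (g (insert u (C ∩ D)) - t) ≤ g (C ∩ D) := min_le_left _ _
        have h2 : min (g (C ∪ D)) (g (insert u (C ∪ D)) - t) ≤ g (C ∪ D) := min_le_left _ _
        linarith
      · have := hsub C hC' (insert u D) hiD
        rw [e1, e2] at this
        have h1 : min (g (C ∩ D)) (g (insert u (C ∩ D)) - t) ≤ g (C ∩ D) := min_le_left _ _
        have h2 : min (g (C ∪ D)) (g (insert u (C ∪ D)) - t) ≤ g (insert u (C ∪ D)) - t := min_le_right _ _
        linarith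
      · have := hsub (insert u C) hiC D hD'
        rw [e3, e4] at this
        have h1 : min (g (C ∩ D)) (g (insert u (C ∩ D)) - t) ≤ g (C ∩ D) := min_le_left _ _
        have h2 : min (g (C ∪ D)) (g (insert u (C ∪ D)) - t) ≤ g (insert u (C ∪ D)) - t := min_le_right _ _
        linarith
      · have := hsub (insert u C) hiC (insert u D) hiD
        rw [e5, e6] at this
        have h1 : min (g (C ∩ D)) (g (insert u (C ∩ D)) - t) ≤ g (insert u (C ∩ D)) - t := min_le_right _ _
        have h2 : min (g (C ∪ D)) (g (insert u (C ∪ D)) - t) ≤ g (insert u (C ∪ D)) - t := min_le_right _ _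
        linarith
    obtain ⟨y', hy'0, hy'le, hy'sum⟩ := ih g' hsub' hnn' hg'0
    have hg'N : g' Nn = g (insert u Nn) - t := by
      simp only [hg']
      refine min_eq_right ?_
      have := le_max_right (0 : ℝ) (g (insert u Nn) - g Nn)
      rw [← ht] at this
      linarith
    refine ⟨fun v => if v = u then t else y' v, ?_, ?_, ?_⟩
    · intro v
      by_cases hv : v = u
      · simp [hv, ht, le_max_left]
      · simp [hv, hy'0 v]
    · intro C hC
      by_cases huC : u ∈ C
      · have hCe : C.erase u ⊆ Nn := by
          intro x hx
          rw [Finset.mem_erase] at hx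
          have := hC hx.2
          rw [Finset.mem_insert] at this
          exact this.resolve_left hx.1
        have hrw : C = insert u (C.erase u) := (Finset.insert_erase huC).symm
        have hsum : ∑ v ∈ C, (if v = u then t else y' v)
            = t + ∑ v ∈ C.erase u, y' v := by
          conv_lhs => rw [hrw]
          rw [Finset.sum_insert (Finset.notMem_erase u _)]
          simp only [if_pos rfl]
          congr 1
          refine Finset.sum_congr rfl fun v hv => ?_
          rw [if_neg (Finset.ne_of_mem_erase hv)]
        rw [hsum]
        have h1 := hy'le (C.erase u) hCe
        have h2 : g' (C.erase u) ≤ g (insert u (C.erase u)) - t := min_le_right _ _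
        rw [← hrw] at h2
        linarith
      · have hCN : C ⊆ Nn := fun x hx => by
          have := hC hx
          rw [Finset.mem_insert] at this
          exact this.resolve_left (fun h : x = u => huC (h ▸ hx))
        have hsum : ∑ v ∈ C, (if v = u then t else y' v) = ∑ v ∈ C, y' v := by
          refine Finset.sum_congr rfl fun v hv => ?_
          rw [if_neg (fun h : v = u => huC (h ▸ hv))]
        rw [hsum]
        exact (hy'le C hCN).trans (min_le_left _ _)
    · rw [Finset.sum_insert hu]
      simp only [if_pos rfl]
      have hsum : ∑ v ∈ Nn, (if v = u then t else y' v) = ∑ v ∈ Nn, y' v := by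
        refine Finset.sum_congr rfl fun v hv => ?_
        rw [if_neg (fun h : v = u => hu (h ▸ hv))]
      rw [hsum, hy'sum, hg'N]
      simp

/-- converting the bound in terms of `E[f(S ∪ OPT)]` into one in
terms of `f(OPT)` for nonnegative submodular `f`, using the sampling lemma. -/
theorem approximation_vs_opt_nonmonotone
    {α : Type*} [DecidableEq α] (N : Finset α) (f : Finset α → ℝ)
    (hnn : ∀ X, X ⊆ N → 0 ≤ f X)
    (hsub : ∀ X ⊆ N, ∀ Y ⊆ N, f (X ∩ Y) + f (X ∪ Y) ≤ f X + f Y)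
    (OPT : Finset α) (hOPT : OPT ⊆ N)
    {Ω : Type*} [MeasureSpace Ω] [IsProbabilityMeasure (ℙ : Measure Ω)]
    (S : Ω → Finset α) (hSN : ∀ ω, S ω ⊆ N)
    (p : ℝ) (hp0 : 0 ≤ p) (hp1 : p ≤ 1)
    (hprob : ∀ u ∈ N, ((ℙ : Measure Ω) {ω | u ∈ S ω}).toReal ≤ p)
    (hintS : Integrable (fun ω => f (S ω)) (ℙ : Measure Ω))
    (hintSO : Integrable (fun ω => f (S ω ∪ OPT)) (ℙ : Measure Ω))
    (α' : ℝ) (hα : 0 < α')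
    (hyp : α' * ∫ ω, f (S ω ∪ OPT) < ∫ ω, f (S ω)) :
    α' * (1 - p) * f OPT < ∫ ω, f (S ω) := by
  -- Main step: show `(1 - p) * f OPT ≤ ∫ ω, f (S ω ∪ OPT)`.
  have key : (1 - p) * f OPT ≤ ∫ ω, f (S ω ∪ OPT) := by
    rcases eq_or_ne N ∅ with hN | hN
    · -- degenerate case
      have hO : OPT = ∅ := Finset.subset_empty.mp (hN ▸ hOPT)
      have hS : ∀ ω, S ω = ∅ := fun ω => Finset.subset_empty.mp (hN ▸ hSN ω)
      have : (fun ω => f (S ω ∪ OPT)) = fun _ => f ∅ := by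
        funext ω; rw [hS ω, hO, Finset.union_empty]
      rw [this, hO]
      rw [integral_const]
      simp only [measureReal_def, measure_univ, ENNReal.toReal_one, one_smul]
      have h0 : 0 ≤ f ∅ := hnn ∅ (Finset.empty_subset N)
      nlinarith
    · -- the submodular function `g C = f ((N \ C) ∪ OPT)` (adjusted at ∅)
      set g : Finset α → ℝ := fun C => if C = ∅ then 0 else f ((N \ C) ∪ OPT) with hg
      have hsubN : ∀ C : Finset α, (N \ C) ∪ OPT ⊆ N :=
        fun C => Finset.union_subset (Finset.sdiff_subset) hOPT
      -- submodularity of `A ↦ f (A ∪ OPT)` on subsets of N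
      have hsubh : ∀ A ⊆ N, ∀ B ⊆ N,
          f ((A ∩ B) ∪ OPT) + f ((A ∪ B) ∪ OPT) ≤ f (A ∪ OPT) + f (B ∪ OPT) := by
        intro A hA B hB
        have h1 := hsub (A ∪ OPT) (Finset.union_subset hA hOPT)
          (B ∪ OPT) (Finset.union_subset hB hOPT)
        have e1 : (A ∪ OPT) ∩ (B ∪ OPT) = (A ∩ B) ∪ OPT := by
          ext x; simp only [Finset.mem_inter, Finset.mem_union]; tauto
        have e2 : (A ∪ OPT) ∪ (B ∪ OPT) = (A ∪ B) ∪ OPT := by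
          ext x; simp only [Finset.mem_union]; tauto
        rw [e1, e2] at h1
        exact h1
      -- submodularity of `C ↦ f ((N \ C) ∪ OPT)`
      have hsubt : ∀ C ⊆ N, ∀ D ⊆ N,
          f ((N \ (C ∩ D)) ∪ OPT) + f ((N \ (C ∪ D)) ∪ OPT)
            ≤ f ((N \ C) ∪ OPT) + f ((N \ D) ∪ OPT) := by
        intro C hC D hD
        have h1 := hsubh (N \ C) Finset.sdiff_subset (N \ D) Finset.sdiff_subset
        have e1 : (N \ C) ∩ (N \ D) = N \ (C ∪ D) := by
          ext x; simp only [Finset.mem_inter, Finset.mem_sdiff, Finset.mem_union]; tauto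
        have e2 : (N \ C) ∪ (N \ D) = N \ (C ∩ D) := by
          ext x; simp only [Finset.mem_union, Finset.mem_sdiff, Finset.mem_inter]; tauto
        rw [e1, e2] at h1
        linarith
      have hgnn : ∀ C ⊆ N, 0 ≤ g C := by
        intro C _
        simp only [hg]
        split
        · exact le_refl 0
        · exact hnn _ (hsubN C)
      have hgsub : ∀ C ⊆ N, ∀ D ⊆ N, g (C ∩ D) + g (C ∪ D) ≤ g C + g D := by
        intro C hC D hD
        rcases eq_or_ne C ∅ with rfl | hCne
        · simp [hg]
        rcases eq_or_ne D ∅ with rfl | hDne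
        · simp [hg]
        have hCDu : C ∪ D ≠ ∅ := fun h =>
          hCne (Finset.subset_empty.mp (h ▸ Finset.subset_union_left))
        have hfN : 0 ≤ f ((N \ (∅ : Finset α)) ∪ OPT) := hnn _ (hsubN ∅)
        have h1 := hsubt C hC D hD
        rcases eq_or_ne (C ∩ D) ∅ with hCDi | hCDi
        · simp only [hg, if_neg hCne, if_neg hDne, if_neg hCDu, if_pos hCDi]
          rw [hCDi] at h1
          linarith
        · simp only [hg, if_neg hCne, if_neg hDne, if_neg hCDu, if_neg hCDi]
          exact h1
      obtain ⟨y, hy0, hyle, hysum⟩ := exists_base_nonneg N g hgsub hgnn (by simp [hg])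
      have hgN : g N = f OPT := by
        simp only [hg, if_neg hN, Finset.sdiff_self, Finset.empty_union]
      -- key pointwise inequality
      have key2 : ∀ A ⊆ N, f OPT - f (A ∪ OPT) ≤ ∑ u ∈ A, y u := by
        intro A hA
        have hsplit : ∑ u ∈ N \ A, y u + ∑ u ∈ A, y u = ∑ u ∈ N, y u :=
          Finset.sum_sdiff hA
        have h2 : ∑ u ∈ N \ A, y u ≤ g (N \ A) := hyle (N \ A) Finset.sdiff_subset
        have h3 : g (N \ A) ≤ f (A ∪ OPT) := by
          simp only [hg]
          split
          · exact hnn _ (Finset.union_subset hA hOPT)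
          · have e : N \ (N \ A) = A := by
              ext x; simp only [Finset.mem_sdiff]
              constructor
              · rintro ⟨h1, h2⟩
                by_contra hx
                exact h2 ⟨h1, hx⟩
              · intro hx; exact ⟨hA hx, fun h => h.2 hx⟩
            rw [e]
        rw [hgN] at hysum
        linarith
      -- measure theory part
      set E : α → Set Ω := fun u => {ω | u ∈ S ω} with hE
      set F : α → Set Ω := fun u => MeasureTheory.toMeasurable ℙ (E u) with hF
      have hFm : ∀ u, MeasurableSet (F u) := fun u => measurableSet_toMeasurable _ _
      set ψ : Ω → ℝ := fun ω => ∑ u ∈ N, (F u).indicator (fun _ => y u) ω with hψ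
      have hψint : Integrable ψ ℙ := by
        refine integrable_finset_sum _ fun u _ => ?_
        exact (integrable_const (y u)).indicator (hFm u)
      have hφint : Integrable (fun ω => f OPT - f (S ω ∪ OPT)) ℙ :=
        (integrable_const (f OPT)).sub hintSO
      have hle : ∀ ω, f OPT - f (S ω ∪ OPT) ≤ ψ ω := by
        intro ω
        refine (key2 (S ω) (hSN ω)).trans ?_
        have h1 : ∑ u ∈ S ω, y u = ∑ u ∈ N, (if u ∈ S ω then y u else 0) := by
          rw [Finset.sum_ite_mem]
          congr 1
          exact (Finset.inter_eq_right.mpr (hSN ω)).symm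
        rw [h1]
        refine Finset.sum_le_sum fun u _ => ?_
        by_cases hu : u ∈ S ω
        · rw [if_pos hu]
          have hωE : ω ∈ E u := hu
          have hωF : ω ∈ F u := subset_toMeasurable ℙ (E u) hωE
          rw [Set.indicator_of_mem hωF]
        · rw [if_neg hu]
          exact Set.indicator_nonneg (fun _ _ => hy0 u) ω
      have hmono : ∫ ω, (f OPT - f (S ω ∪ OPT)) ≤ ∫ ω, ψ ω :=
        integral_mono hφint hψint hle
      have hφeq : ∫ ω, (f OPT - f (S ω ∪ OPT)) = f OPT - ∫ ω, f (S ω ∪ OPT) := by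
        rw [integral_sub (integrable_const _) hintSO, integral_const]
        simp [measure_univ]
      have hψeq : ∫ ω, ψ ω = ∑ u ∈ N, y u * ((ℙ : Measure Ω) (E u)).toReal := by
        simp only [hψ]
        rw [integral_finset_sum _ (fun u _ => (integrable_const (y u)).indicator (hFm u))]
        refine Finset.sum_congr rfl fun u _ => ?_
        rw [integral_indicator_const _ (hFm u)]
        rw [measureReal_def, measure_toMeasurable]
        simp [mul_comm]
      have hψle : ∑ u ∈ N, y u * ((ℙ : Measure Ω) (E u)).toReal ≤ p * f OPT := by
        have h1 : ∑ u ∈ N, y u * ((ℙ : Measure Ω) (E u)).toReal ≤ ∑ u ∈ N, y u * p := by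
          refine Finset.sum_le_sum fun u hu => ?_
          exact mul_le_mul_of_nonneg_left (hprob u hu) (hy0 u)
        rw [← Finset.sum_mul, hysum, hgN] at h1
        linarith [h1]
      rw [hφeq] at hmono
      rw [hψeq] at hmono
      linarith
  calc α' * (1 - p) * f OPT = α' * ((1 - p) * f OPT) := by ring
    _ ≤ α' * ∫ ω, f (S ω ∪ OPT) := mul_le_mul_of_nonneg_left key hα.le
    _ < ∫ ω, f (S ω) := hyp
end
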